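/- arXiv:0806.2023 — 3 statements merged into one kernel-verified Lean document; each statement's English description precedes it below -/
import Mathlib

section
/- Let r ≥ 1 and let G be an r-graph whose number of edges equals C(x,r) for some real number x ≥ r. Then the number of copies of the complete r-graph on r+1 vertices in G satisfies K^r_{r+1}(G) ≤ C(x,r+1). Moreover, equality holds if and only if x is an integer and G is the complete r-graph on a set of x vertices. -/
/-- Generalized binomial coefficient `C(x, k) = x(x-1)⋯(x-k+1)/k!` for real `x`. -/
noncomputable def gchoose (x : ℝ) (k : ℕ) : ℝ :=
  (∏ i ∈ Finset.range k, (x - i)) / (Nat.factorial k)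

/-- `cliqueCount r G m` is the number of `m`-element vertex subsets all of whose
`r`-element subsets are edges of `G` (i.e. the number of copies of `K^r_m` in `G`). -/
def cliqueCount {V : Type*} [Fintype V] [DecidableEq V]
    (r : ℕ) (G : Finset (Finset V)) (m : ℕ) : ℕ :=
  ((Finset.powersetCard m (Finset.univ : Finset V)).filter
    (fun T => ∀ S ∈ Finset.powersetCard r T, S ∈ G)).card

/-!
Induction on `r` and on the number of edges. If some vertex `u` has degree larger than
`C(x-1, r-1)`, then `G - u` has `C(z, r)` edges for some `z < x - 1`, and the cliques through `u`
inject into the edges of `G - u`; induction and Pascal's rule give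
`K ≤ C(z, r+1) + C(z, r) = C(z+1, r+1) < C(x, r+1)`. Otherwise the cliques through each vertex `u`
are cliques of its link, an `(r-1)`-graph with at most `C(x-1, r-1)` edges, so by induction there
are at most `deg u · (x - r) / r` of them; as each clique contains `r + 1` vertices and each edge
`r`, summing over `u` gives `(r + 1) K ≤ r |G| (x - r) / r = (r + 1) C(x, r+1)`. In the case of
equality every vertex is tight, so the link of a vertex `u` of positive degree is complete on a
set `S` of `x - 1` vertices, every `r`-subset of `S` is an edge, and `G` is complete on `S ∪ {u}`.
-/

open Finset

section GeneralizedBinomial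

open Polynomial Filter

lemma gchoose_eq_eval (x : ℝ) (k : ℕ) :
    gchoose x k = (descPochhammer ℝ k).eval x / k.factorial := by
  rw [gchoose, descPochhammer_eval_eq_prod_range]

lemma gchoose_succ (x : ℝ) (k : ℕ) : gchoose x (k + 1) = gchoose x k * (x - k) / (k + 1) := by
  rw [gchoose_eq_eval, gchoose_eq_eval, descPochhammer_succ_eval, Nat.factorial_succ]
  push_cast
  field_simp

lemma gchoose_add_one_succ (x : ℝ) (k : ℕ) :
    gchoose (x + 1) (k + 1) = gchoose x (k + 1) + gchoose x k := by
  rw [gchoose_succ x k, gchoose_eq_eval, gchoose_eq_eval, descPochhammer_succ_left,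
    Nat.factorial_succ]
  simp only [eval_mul, eval_X, eval_comp, eval_sub, eval_one, add_sub_cancel_right]
  push_cast
  field_simp
  ring

lemma gchoose_natCast (n k : ℕ) : gchoose n k = n.choose k := by
  rw [gchoose_eq_eval, Nat.cast_choose_eq_descPochhammer_div]

lemma gchoose_one (x : ℝ) : gchoose x 1 = x := by
  simp [gchoose]

lemma gchoose_nonneg {x : ℝ} {k : ℕ} (h : (k : ℝ) - 1 ≤ x) : 0 ≤ gchoose x k := by
  rw [gchoose_eq_eval]
  exact div_nonneg (descPochhammer_nonneg h) (by positivity)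

lemma gchoose_pos {x : ℝ} {k : ℕ} (h : (k : ℝ) - 1 < x) : 0 < gchoose x k := by
  rw [gchoose_eq_eval]
  exact div_pos (descPochhammer_pos h) (by positivity)

lemma strictMonoOn_gchoose {k : ℕ} (hk : 1 ≤ k) :
    StrictMonoOn (gchoose · k) (Set.Ici ((k : ℝ) - 1)) := by
  obtain ⟨n, rfl⟩ : ∃ n, k = n + 1 := ⟨k - 1, by omega⟩
  intro a ha b hb hab
  simp only [Set.mem_Ici, Nat.cast_add_one, add_sub_cancel_right] at ha hb
  have hle : gchoose a n ≤ gchoose b n := by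
    rw [gchoose_eq_eval, gchoose_eq_eval]
    gcongr
    exact monotoneOn_descPochhammer_eval n (by simp only [Set.mem_Ici]; linarith)
      (by simp only [Set.mem_Ici]; linarith) hab.le
  simp only [gchoose_succ]
  gcongr ?_ / _
  exact mul_lt_mul_of_le_of_lt_of_nonneg_of_pos hle (by linarith) (by linarith)
    (gchoose_pos (by linarith))

lemma exists_gchoose_eq {k : ℕ} (hk : 1 ≤ k) {c : ℝ} (hc : 0 ≤ c) :
    ∃ y, (k : ℝ) - 1 ≤ y ∧ gchoose y k = c := by
  obtain ⟨n, rfl⟩ : ∃ n, k = n + 1 := ⟨k - 1, by omega⟩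
  have hcont : Continuous (gchoose · (n + 1)) := by
    simp only [gchoose_eq_eval]
    fun_prop
  have htop : Tendsto (gchoose · (n + 1)) atTop atTop := by
    simp only [gchoose_eq_eval]
    refine Tendsto.atTop_div_const (by positivity) (tendsto_atTop_of_leadingCoeff_nonneg _ ?_ ?_)
    · rw [← natDegree_pos_iff_degree_pos, descPochhammer_natDegree]
      omega
    · rw [(monic_descPochhammer ℝ (n + 1)).leadingCoeff]
      exact zero_le_one
  obtain ⟨y, hy, hyc⟩ := intermediate_value_Ici hcont.continuousOn htop
    (show c ∈ Set.Ici (gchoose (((n + 1 : ℕ) : ℝ) - 1) (n + 1)) by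
      rwa [Set.mem_Ici, Nat.cast_add_one, add_sub_cancel_right, gchoose_natCast,
        Nat.choose_succ_self, Nat.cast_zero])
  exact ⟨y, hy, hyc⟩

end GeneralizedBinomial

section Hypergraph

variable {V : Type*} [DecidableEq V]

def degree (G : Finset (Finset V)) (u : V) : ℕ := #{e ∈ G | u ∈ e}

def link (G : Finset (Finset V)) (u : V) : Finset (Finset V) :=
  {e ∈ G | u ∈ e}.image (·.erase u)

def deleteVertex (G : Finset (Finset V)) (u : V) : Finset (Finset V) := {e ∈ G | u ∉ e}

lemma mem_link {G : Finset (Finset V)} {u : V} {s : Finset V} :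
    s ∈ link G u ↔ u ∉ s ∧ insert u s ∈ G := by
  simp only [link, mem_image, mem_filter]
  constructor
  · rintro ⟨e, ⟨he, hue⟩, rfl⟩
    exact ⟨notMem_erase u e, by rwa [insert_erase hue]⟩
  · rintro ⟨hus, hs⟩
    exact ⟨insert u s, ⟨hs, mem_insert_self u s⟩, erase_insert hus⟩

lemma card_link (G : Finset (Finset V)) (u : V) : #(link G u) = degree G u :=
  card_image_of_injOn fun a ha b hb hab => by
    rw [← insert_erase (mem_filter.1 ha).2, ← insert_erase (mem_filter.1 hb).2]
    exact congrArg (insert u) hab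

lemma card_eq_of_mem_link {G : Finset (Finset V)} {r : ℕ} (hG : ∀ e ∈ G, #e = r + 1) {u : V}
    {s : Finset V} (hs : s ∈ link G u) : #s = r := by
  rw [mem_link] at hs
  have := hG _ hs.2
  rw [card_insert_of_notMem hs.1] at this
  omega

lemma degree_add_card_deleteVertex (G : Finset (Finset V)) (u : V) :
    degree G u + #(deleteVertex G u) = #G :=
  card_filter_add_card_filter_not _

lemma deleteVertex_ssubset {G : Finset (Finset V)} {u : V} (hu : 0 < degree G u) :
    deleteVertex G u ⊂ G := by
  obtain ⟨e, he⟩ := card_pos.1 hu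
  exact filter_ssubset.2 ⟨e, (mem_filter.1 he).1, not_not.2 (mem_filter.1 he).2⟩

lemma sum_degree [Fintype V] {F : Finset (Finset V)} {m : ℕ} (hF : ∀ e ∈ F, #e = m) :
    ∑ u, degree F u = m * #F := by
  have := sum_card_bipartiteAbove_eq_sum_card_bipartiteBelow (s := univ) (t := F)
    (r := fun u e => u ∈ e)
  simp only [bipartiteAbove, bipartiteBelow, filter_mem_eq_inter, univ_inter] at this
  simp only [degree, this, sum_congr rfl hF, sum_const, smul_eq_mul, mul_comm]

lemma notMem_of_link_eq_powersetCard {r : ℕ} (hr : 1 ≤ r) {G : Finset (Finset V)} {u : V}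
    {S : Finset V} (hS : r ≤ #S) (hlink : link G u = powersetCard r S) : u ∉ S := by
  intro huS
  obtain ⟨P, huP, hPS, hP⟩ := exists_subsuperset_card_eq (singleton_subset_iff.2 huS)
    (by simpa using hr) hS
  have : P ∈ link G u := by rw [hlink]; exact mem_powersetCard.2 ⟨hPS, hP⟩
  exact (mem_link.1 this).1 (huP (mem_singleton_self u))

lemma exists_pos_degree {r : ℕ} {G : Finset (Finset V)} (hG : ∀ e ∈ G, #e = r + 1)
    (hne : G.Nonempty) : ∃ u, 0 < degree G u := by
  obtain ⟨e, he⟩ := hne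
  obtain ⟨u, hu⟩ := card_pos.1 (by rw [hG e he]; omega : 0 < #e)
  exact ⟨u, card_pos.2 ⟨e, mem_filter.2 ⟨he, hu⟩⟩⟩

variable [Fintype V]

def cliques (r : ℕ) (G : Finset (Finset V)) (m : ℕ) : Finset (Finset V) :=
  {T ∈ powersetCard m univ | ∀ S ∈ powersetCard r T, S ∈ G}

lemma card_cliques (r : ℕ) (G : Finset (Finset V)) (m : ℕ) :
    #(cliques r G m) = cliqueCount r G m := rfl

lemma mem_cliques {r m : ℕ} {G : Finset (Finset V)} {T : Finset V} :
    T ∈ cliques r G m ↔ #T = m ∧ ∀ S ⊆ T, #S = r → S ∈ G := by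
  simp only [cliques, mem_filter, mem_powersetCard, subset_univ, true_and, and_imp]

lemma cliques_powersetCard {r : ℕ} (hr : 1 ≤ r) (S : Finset V) :
    cliques r (powersetCard r S) (r + 1) = powersetCard (r + 1) S := by
  ext T
  rw [mem_cliques, mem_powersetCard]
  constructor
  · rintro ⟨hT, hcl⟩
    refine ⟨fun t ht => ?_, hT⟩
    obtain ⟨P, htP, hPT, hP⟩ := exists_subsuperset_card_eq (singleton_subset_iff.2 ht)
      (by simpa using hr) (by omega : r ≤ #T)
    exact (mem_powersetCard.1 (hcl P hPT hP)).1 (htP (mem_singleton_self t))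
  · rintro ⟨hTS, hT⟩
    exact ⟨hT, fun s hsT hs => mem_powersetCard.2 ⟨hsT.trans hTS, hs⟩⟩

lemma cliqueCount_powersetCard {r : ℕ} (hr : 1 ≤ r) (S : Finset V) :
    cliqueCount r (powersetCard r S) (r + 1) = (#S).choose (r + 1) := by
  rw [← card_cliques, cliques_powersetCard hr, card_powersetCard]

lemma cliques_deleteVertex {r : ℕ} (hr : 1 ≤ r) (G : Finset (Finset V)) (u : V) :
    cliques r (deleteVertex G u) (r + 1) = {T ∈ cliques r G (r + 1) | u ∉ T} := by
  ext T
  simp only [mem_filter, mem_cliques, deleteVertex]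
  constructor
  · rintro ⟨hT, hcl⟩
    refine ⟨⟨hT, fun S hST hS => (hcl S hST hS).1⟩, fun huT => ?_⟩
    obtain ⟨S, huS, hST, hS⟩ := exists_subsuperset_card_eq (singleton_subset_iff.2 huT)
      (by simpa using hr) (by omega : r ≤ #T)
    exact (hcl S hST hS).2 (huS (mem_singleton_self u))
  · rintro ⟨⟨hT, hcl⟩, huT⟩
    exact ⟨hT, fun S hST hS => ⟨hcl S hST hS, fun huS => huT (hST huS)⟩⟩

lemma cliqueCount_eq_deleteVertex_add_degree {r : ℕ} (hr : 1 ≤ r) (G : Finset (Finset V))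
    (u : V) :
    cliqueCount r G (r + 1) =
      cliqueCount r (deleteVertex G u) (r + 1) + degree (cliques r G (r + 1)) u := by
  rw [← card_cliques, ← card_cliques, cliques_deleteVertex hr, degree]
  have := card_filter_add_card_filter_not (s := cliques r G (r + 1)) (fun T => u ∈ T)
  omega

lemma link_cliques_subset_deleteVertex (r : ℕ) (G : Finset (Finset V)) (u : V) :
    link (cliques r G (r + 1)) u ⊆ deleteVertex G u := by
  intro s hs
  obtain ⟨hus, hT⟩ := mem_link.1 hs
  obtain ⟨hT, hcl⟩ := mem_cliques.1 hT
  rw [card_insert_of_notMem hus] at hT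
  exact mem_filter.2 ⟨hcl s (subset_insert u s) (by omega), hus⟩

lemma link_cliques_subset_cliques_link (r : ℕ) (G : Finset (Finset V)) (u : V) :
    link (cliques (r + 1) G (r + 2)) u ⊆ cliques r (link G u) (r + 1) := by
  intro s hs
  obtain ⟨hus, hT⟩ := mem_link.1 hs
  obtain ⟨hT, hcl⟩ := mem_cliques.1 hT
  rw [card_insert_of_notMem hus] at hT
  refine mem_cliques.2 ⟨by omega, fun t hts ht => mem_link.2 ⟨fun hut => hus (hts hut), ?_⟩⟩
  refine hcl _ (insert_subset_insert u hts) ?_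
  rw [card_insert_of_notMem fun hut => hus (hts hut), ht]

lemma degree_cliques_le_card_deleteVertex (r : ℕ) (G : Finset (Finset V)) (u : V) :
    degree (cliques r G (r + 1)) u ≤ #(deleteVertex G u) := by
  rw [← card_link]
  exact card_le_card (link_cliques_subset_deleteVertex r G u)

lemma degree_cliques_le_cliqueCount_link (r : ℕ) (G : Finset (Finset V)) (u : V) :
    degree (cliques (r + 1) G (r + 2)) u ≤ cliqueCount r (link G u) (r + 1) := by
  rw [← card_link]
  exact card_le_card (link_cliques_subset_cliques_link r G u)

lemma exists_eq_powersetCard_one {G : Finset (Finset V)} (hG : ∀ e ∈ G, #e = 1) :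
    ∃ U : Finset V, #U = #G ∧ G = powersetCard 1 U := by
  have hU : G = powersetCard 1 {v | {v} ∈ G} := by
    ext e
    rw [mem_powersetCard]
    constructor
    · intro he
      obtain ⟨v, rfl⟩ := card_eq_one.1 (hG e he)
      simpa using he
    · rintro ⟨hsub, he⟩
      obtain ⟨v, rfl⟩ := card_eq_one.1 he
      simpa using hsub
  refine ⟨_, ?_, hU⟩
  conv_rhs => rw [hU]
  rw [card_powersetCard, Nat.choose_one_right]

lemma eq_powersetCard_insert_of_link_eq {r : ℕ} (hr : 1 ≤ r) {G : Finset (Finset V)} {u : V}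
    {S : Finset V} (hS : r ≤ #S) (hlink : link G u = powersetCard r S)
    (hK : cliqueCount r (link G u) (r + 1) ≤ degree (cliques (r + 1) G (r + 2)) u)
    (hcard : #G ≤ (#S + 1).choose (r + 1)) :
    u ∉ S ∧ G = powersetCard (r + 1) (insert u S) := by
  have huS := notMem_of_link_eq_powersetCard hr hS hlink
  have hcl : cliques r (link G u) (r + 1) ⊆ link (cliques (r + 1) G (r + 2)) u := by
    rw [eq_of_subset_of_card_le (link_cliques_subset_cliques_link r G u)
      (by rwa [card_link, card_cliques])]
  have hsub : powersetCard (r + 1) (insert u S) ⊆ G := by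
    intro e he
    obtain ⟨heS, he⟩ := mem_powersetCard.1 he
    by_cases hue : u ∈ e
    · have : e.erase u ∈ link G u := by
        rw [hlink, mem_powersetCard, card_erase_of_mem hue, he]
        exact ⟨fun t ht => (mem_insert.1 (heS (mem_of_mem_erase ht))).resolve_left
          (ne_of_mem_erase ht), rfl⟩
      simpa [insert_erase hue] using (mem_link.1 this).2
    · have : e ∈ cliques r (link G u) (r + 1) := by
        rw [hlink, cliques_powersetCard hr, mem_powersetCard]
        exact ⟨fun t ht => (mem_insert.1 (heS ht)).resolve_left (by rintro rfl; exact hue ht),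
          he⟩
      exact (mem_cliques.1 (mem_link.1 (hcl this)).2).2 e (subset_insert u e) he
  refine ⟨huS, (eq_of_subset_of_card_le hsub ?_).symm⟩
  rwa [card_powersetCard, card_insert_of_notMem huS]

end Hypergraph

section Lovasz

variable {V : Type*} [Fintype V] [DecidableEq V]

/-- Allowing `x = r - 1` admits the empty graph, so that the inductions through links and
vertex deletions need no special case for it. -/
def LovaszBound (r : ℕ) (G : Finset (Finset V)) : Prop :=
  ∀ x : ℝ, (r : ℝ) - 1 ≤ x → (#G : ℝ) = gchoose x r →
    (cliqueCount r G (r + 1) : ℝ) ≤ gchoose x (r + 1)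

namespace LovaszBound

variable {r : ℕ} {L : Finset (Finset V)}

lemma cliqueCount_le_mul (hL : LovaszBound r L) (hr : 1 ≤ r) {y : ℝ} (hy : (r : ℝ) - 1 ≤ y)
    (hLy : (#L : ℝ) ≤ gchoose y r) :
    (cliqueCount r L (r + 1) : ℝ) ≤ #L * (y - r) / (r + 1) := by
  obtain ⟨w, hw, hwL⟩ := exists_gchoose_eq hr (Nat.cast_nonneg (α := ℝ) #L)
  have hwy : w ≤ y := ((strictMonoOn_gchoose hr).le_iff_le hw hy).1 (hwL ▸ hLy)
  calc (cliqueCount r L (r + 1) : ℝ) ≤ gchoose w (r + 1) := hL w hw hwL.symm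
    _ = #L * (w - r) / (r + 1) := by rw [gchoose_succ, hwL]
    _ ≤ #L * (y - r) / (r + 1) := by gcongr

lemma eq_gchoose_of_le_cliqueCount (hL : LovaszBound r L) (hr : 1 ≤ r) {y : ℝ}
    (hy : (r : ℝ) - 1 ≤ y) (hLy : (#L : ℝ) ≤ gchoose y r) (hL0 : L.Nonempty)
    (hK : #L * (y - r) / (r + 1) ≤ (cliqueCount r L (r + 1) : ℝ)) :
    (#L : ℝ) = gchoose y r ∧ (cliqueCount r L (r + 1) : ℝ) = gchoose y (r + 1) := by
  obtain ⟨w, hw, hwL⟩ := exists_gchoose_eq hr (Nat.cast_nonneg (α := ℝ) #L)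
  have hwy : w ≤ y := ((strictMonoOn_gchoose hr).le_iff_le hw hy).1 (hwL ▸ hLy)
  have hyw : y ≤ w := by
    have hKw : (cliqueCount r L (r + 1) : ℝ) ≤ #L * (w - r) / (r + 1) := by
      rw [← hwL, ← gchoose_succ]
      exact hL w hw hwL.symm
    have hL0 : (0 : ℝ) < #L := by exact_mod_cast hL0.card_pos
    have := hK.trans hKw
    rw [div_le_div_iff_of_pos_right (by positivity), mul_le_mul_iff_right₀ hL0] at this
    linarith
  obtain rfl := le_antisymm hwy hyw
  refine ⟨hwL.symm, le_antisymm (hL w hy hwL.symm) ?_⟩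
  rwa [gchoose_succ, hwL]

end LovaszBound


lemma degree_cliques_le {r : ℕ} (hr : 1 ≤ r) {G : Finset (Finset V)} {x : ℝ}
    (hx : (r : ℝ) ≤ x) {u : V} (hlink : LovaszBound r (link G u))
    (hu : (degree G u : ℝ) ≤ gchoose (x - 1) r) :
    (degree (cliques (r + 1) G (r + 2)) u : ℝ) ≤ degree G u * (x - 1 - r) / (r + 1) := by
  calc (degree (cliques (r + 1) G (r + 2)) u : ℝ) ≤ cliqueCount r (link G u) (r + 1) := by
        exact_mod_cast degree_cliques_le_cliqueCount_link r G u
    _ ≤ degree G u * (x - 1 - r) / (r + 1) := by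
        rw [← card_link] at hu ⊢
        exact hlink.cliqueCount_le_mul hr (by linarith) hu

lemma sum_degree_cliques (r : ℕ) (G : Finset (Finset V)) :
    ∑ u, (degree (cliques r G (r + 1)) u : ℝ) = (r + 1) * cliqueCount r G (r + 1) := by
  rw [← card_cliques]
  exact_mod_cast sum_degree fun T hT => (mem_cliques.1 hT).1

lemma sum_degree_mul {r : ℕ} {G : Finset (Finset V)} (hG : ∀ e ∈ G, #e = r + 1) {x : ℝ}
    (hcard : (#G : ℝ) = gchoose x (r + 1)) :
    ∑ u, (degree G u : ℝ) * (x - 1 - r) / (r + 1) = (r + 2) * gchoose x (r + 2) := by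
  rw [← sum_div, ← sum_mul, ← Nat.cast_sum, sum_degree hG, gchoose_succ x (r + 1), ← hcard]
  push_cast
  field_simp
  ring

lemma cliqueCount_lt_of_gchoose_lt_degree {r : ℕ} (hr : 1 ≤ r) {G : Finset (Finset V)}
    {x : ℝ} (hx : (r : ℝ) ≤ x) (hcard : (#G : ℝ) = gchoose x (r + 1)) {u : V}
    (hu : gchoose (x - 1) r < degree G u) (hdel : LovaszBound (r + 1) (deleteVertex G u)) :
    (cliqueCount (r + 1) G (r + 2) : ℝ) < gchoose x (r + 2) := by
  have hsplit : (degree G u : ℝ) + #(deleteVertex G u) = #G := by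
    exact_mod_cast degree_add_card_deleteVertex G u
  have hpascal := gchoose_add_one_succ (x - 1) r
  rw [sub_add_cancel] at hpascal
  have hD : (#(deleteVertex G u) : ℝ) < gchoose (x - 1) (r + 1) := by linarith
  have hxr : (r : ℝ) < x - 1 := by
    by_contra! h
    have : gchoose (x - 1) r * (x - 1 - r) / (r + 1) ≤ 0 :=
      div_nonpos_of_nonpos_of_nonneg
        (mul_nonpos_of_nonneg_of_nonpos (gchoose_nonneg (by linarith)) (by linarith))
        (by positivity)
    rw [← gchoose_succ] at this
    linarith [(Nat.cast_nonneg (α := ℝ) #(deleteVertex G u))]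
  obtain ⟨z, hz, hzD⟩ :=
    exists_gchoose_eq (k := r + 1) (by omega) (Nat.cast_nonneg (α := ℝ) #(deleteVertex G u))
  push_cast at hz
  rw [add_sub_cancel_right] at hz
  have hzx : z < x - 1 := by
    refine ((strictMonoOn_gchoose (k := r + 1) (by omega)).lt_iff_lt ?_ ?_).1 (hzD ▸ hD) <;>
      simp only [Set.mem_Ici] <;> push_cast <;> linarith
  have hK : cliqueCount (r + 1) G (r + 2) ≤
      cliqueCount (r + 1) (deleteVertex G u) (r + 2) + #(deleteVertex G u) := by
    rw [cliqueCount_eq_deleteVertex_add_degree (r := r + 1) (by omega) G u]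
    exact Nat.add_le_add_left (degree_cliques_le_card_deleteVertex (r + 1) G u) _
  calc (cliqueCount (r + 1) G (r + 2) : ℝ)
      ≤ cliqueCount (r + 1) (deleteVertex G u) (r + 2) + #(deleteVertex G u) := by
        exact_mod_cast hK
    _ ≤ gchoose z (r + 2) + gchoose z (r + 1) := by
        rw [hzD]
        gcongr
        exact hdel z (by push_cast; linarith) hzD.symm
    _ = gchoose (z + 1) (r + 2) := (gchoose_add_one_succ z (r + 1)).symm
    _ < gchoose x (r + 2) := by
        refine strictMonoOn_gchoose (k := r + 2) (by omega) ?_ ?_ (by linarith) <;>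
          simp only [Set.mem_Ici] <;> push_cast <;> linarith

theorem lovaszBound {r : ℕ} (hr : 1 ≤ r) {G : Finset (Finset V)} (hG : ∀ e ∈ G, #e = r) :
    LovaszBound r G := by
  induction r, hr using Nat.le_induction generalizing G with
  | base =>
    intro x _ hcard
    obtain ⟨U, hU, rfl⟩ := exists_eq_powersetCard_one hG
    rw [cliqueCount_powersetCard le_rfl, ← gchoose_natCast, hU, ← gchoose_one x, hcard]
  | succ r hr ih =>
    induction G using Finset.strongInduction with
    | H G ihG =>
    intro x hx hcard
    push_cast at hx
    rw [add_sub_cancel_right] at hx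
    by_cases hB : ∃ u, gchoose (x - 1) r < degree G u
    · obtain ⟨u, hu⟩ := hB
      have hpos : 0 < degree G u := by exact_mod_cast (gchoose_nonneg (by linarith)).trans_lt hu
      exact (cliqueCount_lt_of_gchoose_lt_degree hr hx hcard hu
        (ihG _ (deleteVertex_ssubset hpos) fun e he => hG e (filter_subset _ _ he))).le
    · push Not at hB
      have hsum := sum_le_sum (s := univ) fun u _ =>
        degree_cliques_le hr hx (ih fun e he => card_eq_of_mem_link hG he) (hB u)
      rw [sum_degree_cliques, sum_degree_mul hG hcard] at hsum
      push_cast at hsum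
      exact le_of_mul_le_mul_left (a := (r : ℝ) + 2) (by linarith) (by positivity)

lemma degree_cliques_eq_of_cliqueCount_eq {r : ℕ} (hr : 1 ≤ r) {G : Finset (Finset V)}
    (hG : ∀ e ∈ G, #e = r + 1) {x : ℝ} (hx : (r : ℝ) ≤ x)
    (hcard : (#G : ℝ) = gchoose x (r + 1))
    (heq : (cliqueCount (r + 1) G (r + 2) : ℝ) = gchoose x (r + 2)) (u : V) :
    (degree G u : ℝ) ≤ gchoose (x - 1) r ∧
      (degree (cliques (r + 1) G (r + 2)) u : ℝ) = degree G u * (x - 1 - r) / (r + 1) := by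
  have hdeg v : (degree G v : ℝ) ≤ gchoose (x - 1) r := by
    by_contra! hv
    exact (cliqueCount_lt_of_gchoose_lt_degree hr hx hcard hv
      (lovaszBound (by omega) fun e he => hG e (filter_subset _ _ he))).ne heq
  refine ⟨hdeg u, (sum_eq_sum_iff_of_le fun v _ => degree_cliques_le hr hx
    (lovaszBound hr fun e he => card_eq_of_mem_link hG he) (hdeg v)).1 ?_ u (mem_univ u)⟩
  rw [sum_degree_cliques, sum_degree_mul hG hcard, heq]
  push_cast
  ring

theorem eq_powersetCard_of_cliqueCount_eq {r : ℕ} (hr : 1 ≤ r) {G : Finset (Finset V)}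
    (hG : ∀ e ∈ G, #e = r) {x : ℝ} (hx : (r : ℝ) ≤ x) (hcard : (#G : ℝ) = gchoose x r)
    (heq : (cliqueCount r G (r + 1) : ℝ) = gchoose x (r + 1)) :
    ∃ S : Finset V, (#S : ℝ) = x ∧ G = powersetCard r S := by
  induction r, hr using Nat.le_induction generalizing G x with
  | base =>
    obtain ⟨U, hU, rfl⟩ := exists_eq_powersetCard_one hG
    exact ⟨U, by rw [hU, hcard, gchoose_one], rfl⟩
  | succ r hr ih =>
    push_cast at hx
    obtain ⟨u, hu⟩ := exists_pos_degree hG <| card_pos.1 <| by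
      have : (0 : ℝ) < #G := hcard ▸ gchoose_pos (by push_cast; linarith)
      exact_mod_cast this
    obtain ⟨hdegu, htight⟩ :=
      degree_cliques_eq_of_cliqueCount_eq hr hG (by linarith) hcard heq u
    have hLuniform : ∀ e ∈ link G u, #e = r := fun e he => card_eq_of_mem_link hG he
    have hKu := degree_cliques_le_cliqueCount_link r G u
    rw [← card_link] at hu hdegu
    obtain ⟨hLcard, hLK⟩ := (lovaszBound hr hLuniform).eq_gchoose_of_le_cliqueCount hr
      (by linarith) hdegu (card_pos.1 hu) (by rw [card_link, ← htight]; exact_mod_cast hKu)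
    obtain ⟨S, hS, hlinkS⟩ := ih hLuniform (by linarith) hLcard hLK
    have hKeq :
        (cliqueCount r (link G u) (r + 1) : ℝ) = degree (cliques (r + 1) G (r + 2)) u := by
      rw [htight, hLK, gchoose_succ, ← hLcard, card_link]
    have hGcard : (#G : ℝ) = (#S + 1).choose (r + 1) := by
      rw [hcard, ← gchoose_natCast]
      push_cast
      congr 1
      linarith
    obtain ⟨huS, hGS⟩ := eq_powersetCard_insert_of_link_eq hr
      (by exact_mod_cast (show (r : ℝ) ≤ #S by linarith)) hlinkS
      (by exact_mod_cast hKeq.le) (by exact_mod_cast hGcard.le)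
    refine ⟨insert u S, ?_, hGS⟩
    rw [card_insert_of_notMem huS]
    push_cast
    linarith

end Lovasz

/-- Lovász's version of the Kruskal–Katona theorem: if `G` is an `r`-graph with
`C(x,r)` edges, `x ≥ r`, then `K^r_{r+1}(G) ≤ C(x,r+1)`, with equality iff `x` is an
integer and `G` is the complete `r`-graph on a set of `x` vertices. -/
theorem stmt0 {V : Type*} [Fintype V] [DecidableEq V] (r : ℕ) (hr : 1 ≤ r)
    (G : Finset (Finset V)) (hG : ∀ e ∈ G, e.card = r)
    (x : ℝ) (hx : (r : ℝ) ≤ x) (hcard : (G.card : ℝ) = gchoose x r) :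
    (cliqueCount r G (r + 1) : ℝ) ≤ gchoose x (r + 1) ∧
    ((cliqueCount r G (r + 1) : ℝ) = gchoose x (r + 1) ↔
      ∃ S : Finset V, (S.card : ℝ) = x ∧ G = Finset.powersetCard r S) := by
  refine ⟨lovaszBound hr hG x (by linarith) hcard,
    eq_powersetCard_of_cliqueCount_eq hr hG hx hcard, ?_⟩
  rintro ⟨S, rfl, rfl⟩
  rw [cliqueCount_powersetCard hr, gchoose_natCast]
end

section
/- Suppose 0 ≤ s ≤ r < n/2 and G is the r-graph on the vertex set [n] obtained from the complete r-graph K^r_n by deleting a family F of r-element sets with |F| < C(r,s)⁻¹·C(n,r−s). Then the rank of the inclusion matrix M^r_s(G) over ℚ equals C(n,s). -/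
/-! If `x ≠ 0` is a vector on the `s`-sets with `M^r_s(G) x = 0`, then every `r`-set `e` with
`(M x)_e = ∑_{S ⊆ e} x_S ≠ 0` lies in `F`. Such sets are numerous: by induction on `s`, at least
`C(n - 2s, r - s)` of them exist. Either `x` does not change when one element of an `s`-set is
exchanged, so it is a nonzero constant and all entries are nonzero; or `x(S + u) ≠ x(S + v)` for
some `S`, and then `x' = x(· + u) - x(· + v)` is a nonzero vector on the `(s - 1)`-sets avoiding
`u, v`, with `(M x')_e = (M x)_{e + u} - (M x)_{e + v}`, so every `(r - 1)`-set `e` counted for `x'`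
extends by `u` or by `v` to an `r`-set counted for `x`. Comparing descending factorials gives
`C(n, r - s) ≤ C(r, s) C(n - 2s, r - s)`, which contradicts the bound on `|F|`. -/

def inclMatrix {V : Type*} [Fintype V] [DecidableEq V]
    (G : Finset (Finset V)) (s : ℕ) :
    Matrix {e // e ∈ G} {S // S ∈ Finset.powersetCard s (Finset.univ : Finset V)} ℚ :=
  fun e S => if (S : Finset V) ⊆ (e : Finset V) then 1 else 0

open Finset

namespace Nat

theorem choose_le_choose_add_add (a k m : ℕ) : a.choose k ≤ (a + m).choose (k + m) := by
  induction m with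
  | zero => rfl
  | succ m ih =>
    rw [← add_assoc, ← add_assoc, choose_succ_succ']
    exact ih.trans (le_add_right _ _)

theorem choose_le_choose_mul_choose {n s k : ℕ} (h : 2 * (s + k) ≤ n) :
    n.choose k ≤ (s + k).choose k * (n - 2 * s).choose k := by
  have hfactor : ∀ i < k, (k - i) * (n - i) ≤ (s + k - i) * (n - 2 * s - i) := by
    intro i hi
    obtain ⟨j, rfl⟩ : ∃ j, k = i + j := ⟨k - i, by omega⟩
    obtain ⟨m, rfl⟩ : ∃ m, n = 2 * s + i + m := ⟨n - 2 * s - i, by omega⟩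
    rw [show i + j - i = j by omega, show 2 * s + i + m - i = 2 * s + m by omega,
      show s + (i + j) - i = s + j by omega, show 2 * s + i + m - 2 * s - i = m by omega]
    nlinarith
  have hprod : k ! * n.descFactorial k ≤ (s + k).descFactorial k * (n - 2 * s).descFactorial k := by
    rw [← descFactorial_self, descFactorial_eq_prod_range, descFactorial_eq_prod_range,
      descFactorial_eq_prod_range, descFactorial_eq_prod_range, ← prod_mul_distrib,
      ← prod_mul_distrib]
    exact prod_le_prod' fun i hi => hfactor i (mem_range.mp hi)
  simp only [descFactorial_eq_factorial_mul_choose] at hprod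
  refine le_of_mul_le_mul_left ?_ (mul_pos k.factorial_pos k.factorial_pos)
  linarith

end Nat

section SumSubsets

variable {V K : Type*} [DecidableEq V]

theorem eq_of_forall_insert_eq {α : Type*} {A : Finset V} {x : Finset V → α} {s : ℕ}
    (h : ∀ u ∈ A, ∀ v ∈ A, ∀ S ⊆ A, #S = s → u ∉ S → v ∉ S → x (insert u S) = x (insert v S))
    {S T : Finset V} (hS : S ∈ powersetCard (s + 1) A) (hT : T ∈ powersetCard (s + 1) A) :
    x S = x T := by
  rw [mem_powersetCard] at hS hT
  induction hk : #(S \ T) generalizing S with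
  | zero =>
    rw [eq_of_subset_of_card_le (sdiff_eq_empty_iff_subset.mp (card_eq_zero.mp hk))
      (by omega)]
  | succ k ih =>
    obtain ⟨u, hu⟩ : (S \ T).Nonempty := card_pos.mp (by omega)
    obtain ⟨v, hv⟩ : (T \ S).Nonempty := card_pos.mp (by rw [← card_sdiff_comm (by omega)]; omega)
    rw [mem_sdiff] at hu hv
    have hvS : v ∉ S.erase u := fun h => hv.2 (mem_of_mem_erase h)
    have hexchange : x S = x (insert v (S.erase u)) := by
      conv_lhs => rw [← insert_erase hu.1]
      exact h u (hS.1 hu.1) v (hT.1 hv.1) _ ((erase_subset _ _).trans hS.1)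
        (by rw [card_erase_of_mem hu.1, hS.2]; rfl) (notMem_erase _ _) hvS
    have hsdiff : insert v (S.erase u) \ T = (S \ T).erase u := by
      ext a
      simp only [mem_sdiff, mem_insert, mem_erase]
      constructor
      · rintro ⟨rfl | ⟨hau, haS⟩, haT⟩
        exacts [absurd hv.1 haT, ⟨hau, haS, haT⟩]
      · rintro ⟨hau, haS, haT⟩
        exact ⟨Or.inr ⟨hau, haS⟩, haT⟩
    rw [hexchange]
    refine ih ⟨insert_subset (hT.1 hv.1) ((erase_subset _ _).trans hS.1), ?_⟩ ?_
    · rw [card_insert_of_notMem hvS, card_erase_of_mem hu.1, hS.2]; rfl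
    · rw [hsdiff, card_erase_of_mem (mem_sdiff.mpr hu), hk]; rfl

def sumSubsets [AddCommMonoid K] (x : Finset V → K) (s : ℕ) (e : Finset V) : K :=
  ∑ S ∈ powersetCard s e, x S

theorem sumSubsets_insert [AddCommMonoid K] (x : Finset V → K) (s : ℕ) {w : V} {e : Finset V}
    (hw : w ∉ e) :
    sumSubsets x (s + 1) (insert w e) =
      sumSubsets x (s + 1) e + sumSubsets (fun S => x (insert w S)) s e := by
  have hinj : Set.InjOn (insert w) (powersetCard s e : Set (Finset V)) := by
    intro a ha b hb hab
    have ha' : w ∉ a := fun h => hw ((mem_powersetCard.mp ha).1 h)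
    have hb' : w ∉ b := fun h => hw ((mem_powersetCard.mp hb).1 h)
    rw [← erase_insert ha', hab, erase_insert hb']
  have hdisj : Disjoint (powersetCard (s + 1) e) ((powersetCard s e).image (insert w)) := by
    rw [disjoint_left]
    rintro _ ha hb
    obtain ⟨b, -, rfl⟩ := mem_image.mp hb
    exact hw ((mem_powersetCard.mp ha).1 (mem_insert_self w b))
  rw [sumSubsets, powersetCard_succ_insert hw, sum_union hdisj, sum_image hinj]
  rfl

theorem sumSubsets_insert_sub_insert [AddCommGroup K] (x : Finset V → K) (s : ℕ) {u v : V}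
    {e : Finset V} (hu : u ∉ e) (hv : v ∉ e) :
    sumSubsets x (s + 1) (insert u e) - sumSubsets x (s + 1) (insert v e) =
      sumSubsets (fun S => x (insert u S) - x (insert v S)) s e := by
  rw [sumSubsets_insert x s hu, sumSubsets_insert x s hv, sumSubsets, sumSubsets, sumSubsets,
    sumSubsets, sum_sub_distrib]
  abel

theorem sumSubsets_ne_zero_of_forall_insert_eq [Field K] [CharZero K] {A : Finset V}
    {x : Finset V → K} {s r : ℕ} (hsr : s + 1 ≤ r)
    (h : ∀ u ∈ A, ∀ v ∈ A, ∀ S ⊆ A, #S = s → u ∉ S → v ∉ S → x (insert u S) = x (insert v S))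
    (hx : ∃ S ∈ powersetCard (s + 1) A, x S ≠ 0) {e : Finset V} (he : e ∈ powersetCard r A) :
    sumSubsets x (s + 1) e ≠ 0 := by
  obtain ⟨S₀, hS₀, hxS₀⟩ := hx
  have hconst : ∀ S ∈ powersetCard (s + 1) e, x S = x S₀ := fun S hS =>
    eq_of_forall_insert_eq h (powersetCard_mono (mem_powersetCard.mp he).1 hS) hS₀
  rw [sumSubsets, sum_congr rfl hconst, sum_const, card_powersetCard,
    (mem_powersetCard.mp he).2, nsmul_eq_mul]
  exact mul_ne_zero (Nat.cast_ne_zero.mpr (Nat.choose_pos hsr).ne') hxS₀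

theorem card_filter_sumSubsets_sub_le [AddCommGroup K] [DecidableEq K] {A : Finset V} {u v : V}
    (hu : u ∈ A) (hv : v ∈ A) (x : Finset V → K) (s r : ℕ) :
    #{e ∈ powersetCard r ((A.erase u).erase v) |
        sumSubsets (fun S => x (insert u S) - x (insert v S)) s e ≠ 0} ≤
      #{e ∈ powersetCard (r + 1) A | sumSubsets x (s + 1) e ≠ 0} := by
  let extend e := if sumSubsets x (s + 1) (insert u e) ≠ 0 then insert u e else insert v e
  have hnotMem : ∀ e ∈ powersetCard r ((A.erase u).erase v), u ∉ e ∧ v ∉ e := fun e he =>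
    ⟨fun h => by simpa using (mem_powersetCard.mp he).1 h,
      fun h => by simpa using (mem_powersetCard.mp he).1 h⟩
  have herase : ∀ e ∈ powersetCard r ((A.erase u).erase v), ((extend e).erase u).erase v = e := by
    intro e he
    obtain ⟨hue, hve⟩ := hnotMem e he
    ext a
    simp only [extend]
    split_ifs <;> simp only [mem_erase, mem_insert] <;> grind
  refine card_le_card_of_injOn extend (fun e he => ?_) fun e₁ h₁ e₂ h₂ heq => ?_
  · rw [mem_coe, mem_filter] at he ⊢
    obtain ⟨hue, hve⟩ := hnotMem e he.1
    have hsub := (mem_powersetCard.mp he.1).1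
    have hmem : ∀ w ∈ A, w ∉ e → insert w e ∈ powersetCard (r + 1) A := fun w hw hwe =>
      mem_powersetCard.mpr ⟨insert_subset hw (hsub.trans ((erase_subset _ _).trans
        (erase_subset _ _))), by rw [card_insert_of_notMem hwe, (mem_powersetCard.mp he.1).2]⟩
    by_cases hxu : sumSubsets x (s + 1) (insert u e) ≠ 0
    · simp only [extend, if_pos hxu]
      exact ⟨hmem u hu hue, hxu⟩
    · simp only [extend, if_neg hxu]
      refine ⟨hmem v hv hve, fun hxv => he.2 ?_⟩
      rw [← sumSubsets_insert_sub_insert x s hue hve, not_not.mp hxu, hxv, sub_zero]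
  · rw [← herase e₁ (mem_filter.mp h₁).1, heq, herase e₂ (mem_filter.mp h₂).1]

theorem choose_le_card_filter_sumSubsets_ne_zero [Field K] [CharZero K] [DecidableEq K] {s r : ℕ}
    {A : Finset V} {x : Finset V → K} (hsr : s ≤ r) (hA : 2 * r < #A)
    (hx : ∃ S ∈ powersetCard s A, x S ≠ 0) :
    (#A - 2 * s).choose (r - s) ≤ #{e ∈ powersetCard r A | sumSubsets x s e ≠ 0} := by
  induction s generalizing r A x with
  | zero =>
    obtain ⟨S, hS, hxS⟩ := hx
    rw [card_eq_zero.mp (mem_powersetCard.mp hS).2] at hxS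
    rw [filter_true_of_mem fun e _ => by simpa [sumSubsets] using hxS, card_powersetCard]
    simp
  | succ s ih =>
    by_cases hswap : ∀ u ∈ A, ∀ v ∈ A, ∀ S ⊆ A, #S = s → u ∉ S → v ∉ S →
        x (insert u S) = x (insert v S)
    · rw [filter_true_of_mem fun e he => sumSubsets_ne_zero_of_forall_insert_eq hsr hswap hx he,
        card_powersetCard]
      calc (#A - 2 * (s + 1)).choose (r - (s + 1))
          ≤ (#A - 2 * (s + 1) + (s + 1)).choose (r - (s + 1) + (s + 1)) :=
            Nat.choose_le_choose_add_add _ _ _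
        _ ≤ (#A).choose r := by
            rw [Nat.sub_add_cancel hsr]; exact Nat.choose_le_choose _ (by omega)
    · push Not at hswap
      obtain ⟨u, hu, v, hv, S, hSA, hS, huS, hvS, hne⟩ := hswap
      obtain ⟨r, rfl⟩ : ∃ r', r = r' + 1 := ⟨r - 1, by omega⟩
      have hvu : v ≠ u := by rintro rfl; exact hne rfl
      have hcard : #((A.erase u).erase v) = #A - 2 := by
        rw [card_erase_of_mem (mem_erase.mpr ⟨hvu, hv⟩), card_erase_of_mem hu]
        rfl
      have hx' : ∃ S ∈ powersetCard s ((A.erase u).erase v),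
          x (insert u S) - x (insert v S) ≠ 0 :=
        ⟨S, mem_powersetCard.mpr ⟨fun a ha => mem_erase.mpr ⟨fun h => hvS (h ▸ ha),
          mem_erase.mpr ⟨fun h => huS (h ▸ ha), hSA ha⟩⟩, hS⟩, sub_ne_zero.mpr hne⟩
      have := ih (r := r) (by omega) (by omega) hx'
      rw [hcard, show #A - 2 - 2 * s = #A - 2 * (s + 1) by omega] at this
      rw [Nat.add_sub_add_right]
      exact this.trans (card_filter_sumSubsets_sub_le hu hv x s r)

end SumSubsets

theorem Matrix.rank_eq_card_of_mulVec_injective {m n R : Type*} [Fintype n] [Field R]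
    {A : Matrix m n R} (hA : Function.Injective A.mulVec) : A.rank = Fintype.card n := by
  rw [Matrix.rank, LinearMap.finrank_range_of_inj hA, Module.finrank_fintype_fun_eq_card]

section InclusionMatrix

variable {V : Type*} [Fintype V] [DecidableEq V]

theorem inclMatrix_mulVec_apply (G : Finset (Finset V)) (s : ℕ)
    (x : {S // S ∈ powersetCard s (univ : Finset V)} → ℚ) {e : Finset V} (he : e ∈ G) :
    (inclMatrix G s).mulVec x ⟨e, he⟩ = sumSubsets (Function.extend Subtype.val x 0) s e := by
  have hfilter : powersetCard s e = {S ∈ powersetCard s (univ : Finset V) | S ⊆ e} := by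
    ext S
    simp [and_comm]
  rw [sumSubsets, hfilter, sum_filter, ← sum_coe_sort]
  refine sum_congr rfl fun S _ => ?_
  simp only [inclMatrix, Subtype.val_injective.extend_apply]
  split_ifs <;> simp

theorem rank_inclMatrix_of_card_sdiff_lt {G : Finset (Finset V)} {r s : ℕ} (hsr : s ≤ r)
    (hr : 2 * r < Fintype.card V)
    (hG : #(powersetCard r univ \ G) < (Fintype.card V - 2 * s).choose (r - s)) :
    (inclMatrix G s).rank = (Fintype.card V).choose s := by
  suffices hinj : Function.Injective (inclMatrix G s).mulVec by
    rw [Matrix.rank_eq_card_of_mulVec_injective hinj, Fintype.card_coe, card_powersetCard,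
      card_univ]
  refine (injective_iff_map_eq_zero (inclMatrix G s).mulVecLin).mpr fun x hx => ?_
  by_contra hx0
  obtain ⟨S, hS⟩ : ∃ S, x S ≠ 0 := Function.ne_iff.mp hx0
  have hyS : Function.extend Subtype.val x (0 : Finset V → ℚ) S ≠ 0 := by
    rwa [Subtype.val_injective.extend_apply]
  have hrow : ∀ e (he : e ∈ G), sumSubsets (Function.extend Subtype.val x 0) s e = 0 :=
    fun e he => by rw [← inclMatrix_mulVec_apply G s x he]; exact congrFun hx ⟨e, he⟩
  generalize Function.extend Subtype.val x 0 = y at hyS hrow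
  have hrows : {e ∈ powersetCard r (univ : Finset V) | sumSubsets y s e ≠ 0} ⊆
      powersetCard r univ \ G := fun e he =>
    mem_sdiff.mpr ⟨(mem_filter.mp he).1, fun heG => (mem_filter.mp he).2 (hrow e heG)⟩
  have := (choose_le_card_filter_sumSubsets_ne_zero hsr (by simpa using hr) ⟨S, S.2, hyS⟩).trans
    (card_le_card hrows)
  rw [card_univ] at this
  omega

end InclusionMatrix

theorem stmt5_general (n r s : ℕ) (hs : s ≤ r) (hrn : (r : ℝ) < n / 2)
    (F : Finset (Finset (Fin n)))
    (hFcard : (F.card : ℝ) < ((r.choose s : ℝ))⁻¹ * (n.choose (r - s)))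
    (G : Finset (Finset (Fin n)))
    (hG : G = Finset.powersetCard r (Finset.univ : Finset (Fin n)) \ F) :
    (inclMatrix G s).rank = n.choose s := by
  have hn : 2 * r < n := by exact_mod_cast (by linarith : (2 * r : ℝ) < n)
  have hchoose : n.choose (r - s) ≤ r.choose s * (n - 2 * s).choose (r - s) := by
    have h := Nat.choose_le_choose_mul_choose (n := n) (s := s) (k := r - s) (by omega)
    rwa [Nat.add_sub_cancel' hs, Nat.choose_symm hs] at h
  have hFsmall : F.card < (n - 2 * s).choose (r - s) := by
    have hpos : (0 : ℝ) < r.choose s := by exact_mod_cast Nat.choose_pos hs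
    have h : r.choose s * F.card < n.choose (r - s) := by
      exact_mod_cast (lt_inv_mul_iff₀ hpos).mp hFcard
    exact Nat.lt_of_mul_lt_mul_left (h.trans_le hchoose)
  have hsdiff : powersetCard r univ \ G ⊆ F := by
    rw [hG, sdiff_sdiff_self_left]
    exact inter_subset_right
  simpa using rank_inclMatrix_of_card_sdiff_lt (V := Fin n) hs (by simpa using hn)
    ((card_le_card hsdiff).trans_lt (by simpa using hFsmall))

/-- Rigidity of complete inclusion matrices: if `0 ≤ s ≤ r < n/2` and
`G = K^r_n \ F` with `|F| < C(r,s)⁻¹·C(n,r-s)`, then `rk M^r_s(G) = C(n,s)`. -/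
theorem stmt5 (n r s : ℕ) (hs : s ≤ r) (hrn : (r : ℝ) < n / 2)
    (F : Finset (Finset (Fin n)))
    (hF : F ⊆ Finset.powersetCard r (Finset.univ : Finset (Fin n)))
    (hFcard : (F.card : ℝ) < ((r.choose s : ℝ))⁻¹ * (n.choose (r - s)))
    (G : Finset (Finset (Fin n)))
    (hG : G = Finset.powersetCard r (Finset.univ : Finset (Fin n)) \ F) :
    (inclMatrix G s).rank = n.choose s :=
  stmt5_general n r s hs hrn F hFcard G hG
end

section
/- Let C > 0 and let u, v, w be real numbers with u > 1, v ≥ 1, such that C(u,2) = C(v,2) + w and 1 ≤ w < u − 1 − C. Then u < v + 1 − C/u. -/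
/-!
Put `d = C / u`. If the claim failed, then `v ≤ u - 1 + d`, and since `x ↦ C(x,2)` is increasing
on `[1/2, ∞)`, `w = C(u,2) - C(v,2) ≥ C(u,2) - C(u - 1 + d, 2) = u - 1 - C + d(3 - d)/2`.
As `0 ≤ d ≤ 3`, this contradicts `w < u - 1 - C`.
-/

theorem gchoose_two (x : ℝ) : gchoose x 2 = x * (x - 1) / 2 := by
  simp [gchoose, Finset.prod_range_succ, Nat.factorial]

theorem monotoneOn_gchoose_two : MonotoneOn (gchoose · 2) (Set.Ici (1 / 2)) := by
  intro a ha b _ hab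
  simp only [Set.mem_Ici] at ha
  simp only [gchoose_two]
  nlinarith

theorem gchoose_two_sub_one_add (x d : ℝ) :
    gchoose (x - 1 + d) 2 = gchoose x 2 - (x - 1) + d * x - d * (3 - d) / 2 := by
  simp only [gchoose_two]
  ring

theorem stmt15_general (C u v w : ℝ) (hC : 0 < C) (hv : 1 ≤ v)
    (h : gchoose u 2 = gchoose v 2 + w) (hw1 : 1 ≤ w) (hw2 : w < u - 1 - C) :
    u < v + 1 - C / u := by
  have hCu : C < u := by linarith
  have hu : 0 < u := hC.trans hCu
  set d := C / u with hd
  have hdu : d * u = C := div_mul_cancel₀ C hu.ne'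
  have hd0 : 0 ≤ d := by positivity
  have hd3 : d ≤ 3 := by
    rw [hd, div_le_iff₀ hu]
    linarith
  by_contra! hle
  have hv_le : gchoose v 2 ≤ gchoose (u - 1 + d) 2 :=
    monotoneOn_gchoose_two (by simp; linarith) (by simp; linarith) (by linarith)
  rw [gchoose_two_sub_one_add, hdu] at hv_le
  nlinarith [mul_nonneg hd0 (sub_nonneg.2 hd3)]

/-- If `C > 0`, `C(u,2) = C(v,2) + w` and `1 ≤ w < u - 1 - C`, then `u < v + 1 - C/u`. -/
theorem stmt15 (C u v w : ℝ) (hC : 0 < C) (hu : 1 < u) (hv : 1 ≤ v)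
    (h : gchoose u 2 = gchoose v 2 + w) (hw1 : 1 ≤ w) (hw2 : w < u - 1 - C) :
    u < v + 1 - C / u :=
  stmt15_general C u v w hC hv h hw1 hw2
end
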